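/- arXiv:1201.0822 — 3 statements merged into one kernel-verified Lean document; each statement's English description precedes it below -/
import Mathlib

section
/- As g → ∞, the probability that two independently uniformly chosen maximal isotropic subspaces of a 2g-dimensional symplectic F_q-vector space intersect trivially converges to ∏_{i=1}^∞ (1+q^{−i})^{−1}. -/
/-!
Counting isotropic frames: choosing linearly independent, pairwise orthogonal vectors one at a
time (the `j`-th one in the orthogonal of the span of the previous ones, outside that span) gives
`∏_{j<g} (q^{2g-j} - q^j)` frames of length `g`. Each Lagrangian carries `∏_{j<g} (q^g - q^j)`
of them, so there are `∏_{i=1}^g (q^i + 1)` Lagrangians.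

Fix a Lagrangian `P` and one Lagrangian complement `Q₀`. The complements of `P` are the graphs
`{q + S q}` of the linear maps `S : Q₀ → P`, and such a graph is Lagrangian iff `B (S v) w` is
symmetric in `v, w`. Since `B` pairs `P` and `Q₀` perfectly, these `S` are the symmetric
bilinear forms on `Q₀`, of which there are `q^{g(g+1)/2}`. The probability is therefore
`q^{g(g+1)/2} / ∏_{i=1}^g (q^i + 1) = ∏_{i=1}^g (1 + q^{-i})⁻¹`, the partial products of a
convergent infinite product.
-/

open Module Filter

/-- The standard nondegenerate alternating form on `F^{2g} = (Fin g ⊕ Fin g) → F`. -/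
def stdForm (F : Type*) [CommRing F] (g : ℕ) (x y : (Fin g ⊕ Fin g) → F) : F :=
  ∑ i : Fin g, (x (Sum.inl i) * y (Sum.inr i) - x (Sum.inr i) * y (Sum.inl i))

/-- A maximal isotropic subspace of the standard symplectic space `F^{2g}`. -/
def IsLagrangian (F : Type*) [Field F] (g : ℕ)
    (L : Submodule F ((Fin g ⊕ Fin g) → F)) : Prop :=
  Module.finrank F L = g ∧ ∀ x ∈ L, ∀ y ∈ L, stdForm F g x y = 0

open Submodule (span)

theorem Nat.pow_sub_pow_mul_pow_add_one {q g j : ℕ} (hj : j ≤ g) :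
    (q ^ g - q ^ j) * (q ^ (g - j) + 1) = q ^ (2 * g - j) - q ^ j := by
  obtain ⟨m, rfl⟩ := Nat.exists_eq_add_of_le hj
  rw [show 2 * (j + m) - j = j + m + m by omega, Nat.add_sub_cancel_left, Nat.sub_mul,
    show q ^ (j + m) * (q ^ m + 1) = q ^ (j + m + m) + q ^ (j + m) by ring,
    show q ^ j * (q ^ m + 1) = q ^ j + q ^ (j + m) by ring, Nat.add_sub_add_right]

theorem Nat.choose_succ_two_eq_sum_range (n : ℕ) :
    (n + 1).choose 2 = ∑ i ∈ Finset.range n, (i + 1) := by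
  rw [Nat.choose_two_right, ← Finset.sum_range_id, Finset.sum_range_succ', add_zero]

def Matrix.isSymmEquivSym2 (ι α : Type*) :
    {M : Matrix ι ι α // M.IsSymm} ≃ (Sym2 ι → α) where
  toFun M := Sym2.lift ⟨fun i j => M.1 i j, fun i j => (M.2.apply i j).symm⟩
  invFun f := ⟨Matrix.of fun i j => f s(i, j),
    Matrix.IsSymm.ext fun i j => by simp [Sym2.eq_swap]⟩
  left_inv M := by ext; simp
  right_inv f := funext fun z => Sym2.ind (fun i j => by simp) z

namespace Submodule

variable {R M : Type*} [Ring R] [AddCommGroup M] [Module R M] {P Q₀ : Submodule R M}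

theorem mem_of_span_range_eq {ι : Type*} {s : ι → M} {W : Submodule R M}
    (h : span R (Set.range s) = W) (i : ι) : s i ∈ W :=
  h ▸ subset_span ⟨i, rfl⟩

def graphOver (S : Q₀ →ₗ[R] P) : Submodule R M :=
  LinearMap.range (Q₀.subtype + P.subtype ∘ₗ S)

theorem isCompl_graphOver (h : IsCompl P Q₀) (S : Q₀ →ₗ[R] P) :
    IsCompl P (graphOver S) := by
  refine ⟨disjoint_def.mpr ?_, codisjoint_iff.mpr (eq_top_iff.mpr ?_)⟩
  · rintro _ hx ⟨q, rfl⟩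
    have hq : (q : M) ∈ P := by simpa using P.sub_mem hx (S q).2
    obtain rfl : q = 0 := Subtype.ext (disjoint_def.mp h.1 q hq q.2)
    simp
  · rw [← h.sup_eq_top]
    refine sup_le le_sup_left fun q hq => ?_
    have : q = -(S ⟨q, hq⟩ : M) + ((q : M) + S ⟨q, hq⟩) := by abel
    rw [this]
    exact add_mem (mem_sup_left (neg_mem (S _).2)) (mem_sup_right ⟨⟨q, hq⟩, rfl⟩)

theorem graphOver_injective (h : Disjoint P Q₀) :
    Function.Injective (graphOver : (Q₀ →ₗ[R] P) → Submodule R M) := by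
  intro S S' hSS'
  ext q : 2
  obtain ⟨q', hq'⟩ : (q : M) + S q ∈ graphOver S' := hSS' ▸ ⟨q, rfl⟩
  change (q' : M) + S' q' = q + S q at hq'
  have hdiff : (q' : M) - q ∈ P ⊓ Q₀ :=
    ⟨by rw [show (q' : M) - q = S q - S' q' by rw [sub_eq_sub_iff_add_eq_add, hq', add_comm]]
        exact sub_mem (S q).2 (S' q').2, sub_mem q'.2 q.2⟩
  rw [disjoint_iff.mp h, mem_bot, sub_eq_zero] at hdiff
  rw [Subtype.ext hdiff] at hq'
  exact (add_left_cancel hq').symm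

theorem exists_graphOver_eq (h : IsCompl P Q₀) {Q : Submodule R M} (hQ : IsCompl P Q) :
    ∃ S : Q₀ →ₗ[R] P, graphOver S = Q := by
  set π := P.projectionOnto Q hQ
  refine ⟨-(π ∘ₗ Q₀.subtype), le_antisymm ?_ fun x hx => ?_⟩
  · rintro _ ⟨q, rfl⟩
    rw [← ker_projectionOnto hQ, LinearMap.mem_ker]
    change π ((q : M) + -(π q : M)) = 0
    rw [map_add, map_neg, projectionOnto_apply_left, add_neg_cancel]
  · obtain ⟨p, hp, q, hq, rfl⟩ := mem_sup.mp (h.sup_eq_top ▸ mem_top : x ∈ P ⊔ Q₀)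
    have hπ : π q = -⟨p, hp⟩ := by
      rw [eq_neg_iff_add_eq_zero, ← projectionOnto_apply_left hQ ⟨p, hp⟩, ← map_add,
        add_comm, ← LinearMap.mem_ker, ker_projectionOnto]
      exact hx
    refine ⟨⟨q, hq⟩, ?_⟩
    change q + -(π q : M) = p + q
    rw [hπ, NegMemClass.coe_neg, neg_neg, add_comm]

noncomputable def graphOverEquiv (h : IsCompl P Q₀) : (Q₀ →ₗ[R] P) ≃ {Q // IsCompl P Q} :=
  Equiv.ofBijective (fun S => ⟨graphOver S, isCompl_graphOver h S⟩)
    ⟨fun _ _ hSS' => graphOver_injective h.1 (congrArg Subtype.val hSS'),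
      fun Q => (exists_graphOver_eq h Q.2).imp fun _ hS => Subtype.ext hS⟩

section FiniteField

variable {F V : Type*} [Field F] [AddCommGroup V] [Module F V] [Fintype F] [Finite V]

theorem card_sdiff_of_le {W U : Submodule F V} (h : W ≤ U) :
    Nat.card ((U : Set V) \ W : Set V) =
      Fintype.card F ^ finrank F U - Fintype.card F ^ finrank F W := by
  rw [Nat.card_coe_set_eq, Set.ncard_sdiff h, ← Nat.card_coe_set_eq, ← Nat.card_coe_set_eq,
    SetLike.coe_sort_coe, SetLike.coe_sort_coe, Module.natCard_eq_pow_finrank (K := F) (V := U),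
    Module.natCard_eq_pow_finrank (K := F) (V := W), Nat.card_eq_fintype_card]

theorem card_linearIndependent_span_eq {k : ℕ} (W : Submodule F V) (hW : finrank F W = k) :
    Nat.card {s : Fin k → V // LinearIndependent F s ∧ span F (Set.range s) = W} =
      ∏ j ∈ Finset.range k, (Fintype.card F ^ k - Fintype.card F ^ j) := by
  let e : {t : Fin k → W // LinearIndependent F t} ≃
      {s : Fin k → V // LinearIndependent F s ∧ span F (Set.range s) = W} :=
    { toFun t := ⟨W.subtype ∘ t.1, t.2.map' W.subtype W.ker_subtype, by
        refine eq_of_le_of_finrank_le ?_ ?_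
        · rw [span_le]; rintro _ ⟨i, rfl⟩; exact (t.1 i).2
        · rw [finrank_span_eq_card (t.2.map' W.subtype W.ker_subtype), Fintype.card_fin, hW]⟩
      invFun s := ⟨fun i => ⟨s.1 i, mem_of_span_range_eq s.2.2 i⟩,
        LinearIndependent.of_comp W.subtype s.2.1⟩
      left_inv _ := rfl
      right_inv _ := rfl }
  rw [← Nat.card_congr e, card_linearIndependent hW.ge, hW,
    Fin.prod_univ_eq_prod_range (fun j => Fintype.card F ^ k - Fintype.card F ^ j)]

end FiniteField

end Submodule

namespace LinearMap.BilinForm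

variable {F V : Type*} [Field F] [AddCommGroup V] [Module F V] {B : LinearMap.BilinForm F V}
  {P Q Q₀ : Submodule F V}

theorem mem_orthogonal_span_iff {S : Set V} {v : V} :
    v ∈ B.orthogonal (span F S) ↔ ∀ s ∈ S, B s v = 0 :=
  ⟨fun h s hs => h s (Submodule.subset_span hs),
    fun h _ hn => (Submodule.span_le (p := LinearMap.ker (B.flip v))).mpr h hn⟩

theorem span_le_orthogonal_span {S : Set V} (hS : ∀ x ∈ S, ∀ y ∈ S, B x y = 0) :
    span F S ≤ B.orthogonal (span F S) :=
  Submodule.span_le.mpr fun y hy => mem_orthogonal_span_iff.mpr fun x hx => hS x hx y hy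

theorem isotropic_cons_iff (hB : B.IsAlt) {n : ℕ} {v : V} {s : Fin n → V} :
    (∀ i j, B ((Fin.cons v s : Fin (n + 1) → V) i)
      ((Fin.cons v s : Fin (n + 1) → V) j) = 0) ↔
      (∀ i j, B (s i) (s j) = 0) ∧ v ∈ B.orthogonal (span F (Set.range s)) := by
  simp only [Fin.forall_fin_succ, Fin.cons_zero, Fin.cons_succ, hB v, true_and,
    mem_orthogonal_span_iff, Set.forall_mem_range]
  constructor
  · rintro ⟨-, h⟩
    exact ⟨fun i j => (h i).2 j, fun i => (h i).1⟩
  · rintro ⟨hs, hv⟩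
    exact ⟨fun j => hB.isRefl _ _ (hv j), fun i => ⟨hv i, hs i⟩⟩

abbrev IsotropicFrame (B : LinearMap.BilinForm F V) (n : ℕ) :=
  {s : Fin n → V // LinearIndependent F s ∧ ∀ i j, B (s i) (s j) = 0}

def isotropicFrameSuccEquiv (hB : B.IsAlt) (n : ℕ) :
    B.IsotropicFrame (n + 1) ≃ Σ s : B.IsotropicFrame n,
      ((B.orthogonal (span F (Set.range s.1)) : Set V) \ span F (Set.range s.1) : Set V) where
  toFun s :=
    have h := (isotropic_cons_iff (v := s.1 0) hB).mp
      (by simpa only [Fin.cons_self_tail] using s.2.2)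
    ⟨⟨Fin.tail s.1, (linearIndependent_finSucc.mp s.2.1).1, h.1⟩,
      ⟨s.1 0, h.2, (linearIndependent_finSucc.mp s.2.1).2⟩⟩
  invFun s := ⟨Fin.cons s.2.1 s.1.1, linearIndependent_finCons.mpr ⟨s.1.2.1, s.2.2.2⟩,
    (isotropic_cons_iff hB).mpr ⟨s.1.2.2, s.2.2.1⟩⟩
  left_inv s := by simp only [Fin.cons_self_tail, Subtype.coe_eta]
  right_inv _ := rfl

def IsLagrangian (B : LinearMap.BilinForm F V) (W : Submodule F V) : Prop :=
  W ≤ B.orthogonal W ∧ 2 * finrank F W = finrank F V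

theorem isLagrangian_span_of_isotropicFrame {g : ℕ} (hV : finrank F V = 2 * g)
    (s : B.IsotropicFrame g) : B.IsLagrangian (span F (Set.range s.1)) :=
  ⟨span_le_orthogonal_span (by rintro _ ⟨i, rfl⟩ _ ⟨j, rfl⟩; exact s.2.2 i j),
    by rw [finrank_span_eq_card s.2.1, Fintype.card_fin, hV]⟩

def isotropicFrameEquivSigma {g : ℕ} (hV : finrank F V = 2 * g) :
    B.IsotropicFrame g ≃ Σ L : {W // B.IsLagrangian W},
      {s : Fin g → V // LinearIndependent F s ∧ span F (Set.range s) = L} where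
  toFun s := ⟨⟨_, isLagrangian_span_of_isotropicFrame hV s⟩, s.1, s.2.1, rfl⟩
  invFun s := ⟨s.2.1, s.2.2.1, fun i j =>
    s.1.2.1 (Submodule.mem_of_span_range_eq s.2.2.2 j) _
      (Submodule.mem_of_span_range_eq s.2.2.2 i)⟩
  left_inv _ := rfl
  right_inv := fun ⟨⟨_, _⟩, _, _, rfl⟩ => rfl

theorem apply_add_apply_add (hB : B.IsAlt) (hP : P ≤ B.orthogonal P)
    (hQ₀ : Q₀ ≤ B.orthogonal Q₀) (S : Q₀ →ₗ[F] P) (v w : Q₀) :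
    B ((v : V) + S v) ((w : V) + S w) = B (S v) w - B (S w) v := by
  simp only [map_add, LinearMap.add_apply, hQ₀ w.2 v v.2, hP (S w).2 _ (S v).2,
    ← hB.neg_eq (S w : V) v]
  ring

theorem graphOver_le_orthogonal_iff (hB : B.IsAlt) (hP : P ≤ B.orthogonal P)
    (hQ₀ : Q₀ ≤ B.orthogonal Q₀) (S : Q₀ →ₗ[F] P) :
    Submodule.graphOver S ≤ B.orthogonal (Submodule.graphOver S) ↔
      ∀ v w : Q₀, B (S v) w = B (S w) v := by
  constructor
  · intro h v w
    rw [← sub_eq_zero, ← apply_add_apply_add hB hP hQ₀]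
    exact h ⟨w, rfl⟩ _ ⟨v, rfl⟩
  · rintro h _ ⟨w, rfl⟩ _ ⟨v, rfl⟩
    exact (apply_add_apply_add hB hP hQ₀ S v w).trans (sub_eq_zero.mpr (h v w))

section FiniteDimensional

variable [FiniteDimensional F V]

theorem IsLagrangian.orthogonal_eq (hB' : B.Nondegenerate) (hP : B.IsLagrangian P) :
    B.orthogonal P = P :=
  (Submodule.eq_of_le_of_finrank_le hP.1
    (by rw [finrank_orthogonal hB']; have := hP.2; omega)).symm

theorem IsLagrangian.isCompl_iff_disjoint (hP : B.IsLagrangian P) (hQ : B.IsLagrangian Q) :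
    IsCompl P Q ↔ Disjoint P Q :=
  Submodule.isCompl_iff_disjoint P Q (by have := hP.2; have := hQ.2; omega)

theorem IsLagrangian.isLagrangian_iff_of_isCompl (hP : B.IsLagrangian P) (hPQ : IsCompl P Q) :
    B.IsLagrangian Q ↔ Q ≤ B.orthogonal Q :=
  ⟨And.left, fun h => ⟨h, by
    have := Submodule.finrank_add_eq_of_isCompl hPQ; have := hP.2; omega⟩⟩

theorem exists_mem_orthogonal_notMem_sup (hB : B.IsRefl) (hB' : B.Nondegenerate)
    (hP : B.IsLagrangian P) (hPQ : Disjoint P Q) (hQP : finrank F Q < finrank F P) :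
    ∃ v ∈ B.orthogonal Q, v ∉ P ⊔ Q := by
  by_contra! h
  have hle : B.orthogonal (P ⊔ Q) ≤ P ⊓ Q :=
    le_inf ((orthogonal_le le_sup_left).trans (hP.orthogonal_eq hB').le)
      ((orthogonal_le h).trans (orthogonal_orthogonal hB' hB Q).le)
  rw [disjoint_iff.mp hPQ, le_bot_iff] at hle
  have h₁ := finrank_orthogonal hB' (P ⊔ Q)
  have h₂ := Submodule.finrank_sup_add_finrank_inf_eq P Q
  rw [hle, finrank_bot] at h₁
  rw [disjoint_iff.mp hPQ, finrank_bot] at h₂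
  have := hP.2
  omega

theorem exists_isotropic_disjoint_finrank_succ (hB : B.IsAlt) (hB' : B.Nondegenerate)
    (hP : B.IsLagrangian P) (hQ : Q ≤ B.orthogonal Q) (hPQ : Disjoint P Q)
    (hQP : finrank F Q < finrank F P) :
    ∃ Q' : Submodule F V, Q' ≤ B.orthogonal Q' ∧ Disjoint P Q' ∧
      finrank F Q' = finrank F Q + 1 := by
  obtain ⟨v, hvQ, hvPQ⟩ := exists_mem_orthogonal_notMem_sup hB.isRefl hB' hP hPQ hQP
  have hv : v ≠ 0 := fun h => hvPQ (h ▸ zero_mem _)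
  have hQv : Disjoint Q (F ∙ v) :=
    (Submodule.disjoint_span_singleton' hv).mpr fun h => hvPQ (Submodule.mem_sup_right h)
  refine ⟨Q ⊔ F ∙ v, ?_, hPQ.disjoint_sup_right_of_disjoint_sup_left
    ((Submodule.disjoint_span_singleton' hv).mpr hvPQ), ?_⟩
  · rw [← Submodule.span_eq Q, ← Submodule.span_union]
    refine span_le_orthogonal_span ?_
    rintro x (hx | rfl) y (hy | rfl)
    · exact hQ hy x hx
    · exact hvQ x hx
    · exact hB.isRefl _ _ (hvQ y hy)
    · exact hB _
  · have := Submodule.finrank_sup_add_finrank_inf_eq Q (F ∙ v)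
    rwa [disjoint_iff.mp hQv, finrank_bot, finrank_span_singleton hv, add_zero] at this

theorem IsLagrangian.exists_isCompl (hB : B.IsAlt) (hB' : B.Nondegenerate)
    (hP : B.IsLagrangian P) : ∃ Q, B.IsLagrangian Q ∧ IsCompl P Q := by
  have key (k : ℕ) (hk : k ≤ finrank F P) :
      ∃ Q : Submodule F V, Q ≤ B.orthogonal Q ∧ Disjoint P Q ∧ finrank F Q = k := by
    induction k with
    | zero => exact ⟨⊥, bot_le, disjoint_bot_right, finrank_bot F V⟩
    | succ k ih =>
      obtain ⟨Q, hQ, hPQ, rfl⟩ := ih (by omega)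
      exact exists_isotropic_disjoint_finrank_succ hB hB' hP hQ hPQ (by omega)
  obtain ⟨Q, hQ, hPQ, hQP⟩ := key _ le_rfl
  have hQ : B.IsLagrangian Q := ⟨hQ, hQP ▸ hP.2⟩
  exact ⟨Q, hQ, (hP.isCompl_iff_disjoint hQ).mpr hPQ⟩

noncomputable def isComplLagrangianEquiv (hB : B.IsAlt) (hP : B.IsLagrangian P)
    (hQ₀ : B.IsLagrangian Q₀) (h : IsCompl P Q₀) :
    {S : Q₀ →ₗ[F] P // ∀ v w : Q₀, B (S v) w = B (S w) v} ≃
      {Q // IsCompl P Q ∧ B.IsLagrangian Q} :=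
  ((Submodule.graphOverEquiv h).subtypeEquiv fun S =>
    ((hP.isLagrangian_iff_of_isCompl (Submodule.isCompl_graphOver h S)).trans
      (graphOver_le_orthogonal_iff hB hP.1 hQ₀.1 S)).symm).trans
    (Equiv.subtypeSubtypeEquivSubtypeInter _ _)

theorem domRestrict₁₂_injective (hB : B.IsRefl) (hB' : B.Nondegenerate)
    (hQ₀ : B.IsLagrangian Q₀) (h : Disjoint P Q₀) :
    Function.Injective (B.domRestrict₁₂ P Q₀) := by
  refine (injective_iff_map_eq_zero _).mpr fun p hp => Subtype.ext ?_
  have hpQ₀ : (p : V) ∈ Q₀ := by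
    rw [← hQ₀.orthogonal_eq hB', mem_orthogonal_iff]
    exact fun q hq => hB _ _ (LinearMap.congr_fun hp ⟨q, hq⟩)
  exact Submodule.disjoint_def.mp h p p.2 hpQ₀

noncomputable def symmetricPairingEquiv (hB : B.IsRefl) (hB' : B.Nondegenerate)
    (hP : B.IsLagrangian P) (hQ₀ : B.IsLagrangian Q₀) (h : IsCompl P Q₀) :
    {S : Q₀ →ₗ[F] P // ∀ v w : Q₀, B (S v) w = B (S w) v} ≃
      {β : LinearMap.BilinForm F Q₀ // β.IsSymm} :=
  (LinearEquiv.congrRight ((B.domRestrict₁₂ P Q₀).linearEquivOfInjective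
    (domRestrict₁₂_injective hB hB' hQ₀ h.1)
    (by rw [finrank_linearMap_self]; have := hP.2; have := hQ₀.2; omega))).toEquiv.subtypeEquiv
    fun _ => ⟨fun h => ⟨h⟩, fun h => h.1⟩

end FiniteDimensional

theorem card_isSymm [Fintype F] {W : Type*} [AddCommGroup W] [Module F W]
    [FiniteDimensional F W] {n : ℕ} (hW : finrank F W = n) :
    Nat.card {β : LinearMap.BilinForm F W // β.IsSymm} = Fintype.card F ^ (n + 1).choose 2 := by
  let b := finBasisOfFinrankEq F W hW
  let e : {β : LinearMap.BilinForm F W // β.IsSymm} ≃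
      {M : Matrix (Fin n) (Fin n) F // M.IsSymm} :=
    (toMatrix b).toEquiv.subtypeEquiv fun β => by
      rw [isSymm_iff_basis b, Matrix.IsSymm.ext_iff]
      simp only [LinearEquiv.coe_toEquiv, toMatrix_apply]
      exact ⟨fun h i j => h j i, fun h i j => h j i⟩
  rw [Nat.card_congr (e.trans (Matrix.isSymmEquivSym2 _ _)), Nat.card_fun,
    Nat.card_eq_fintype_card, Nat.card_eq_fintype_card, Sym2.card, Fintype.card_fin]

section FiniteField

variable [Fintype F] [Finite V]

theorem card_isotropicFrame (hB : B.IsAlt) (hB' : B.Nondegenerate) (n : ℕ) :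
    Nat.card (B.IsotropicFrame n) =
      ∏ j ∈ Finset.range n, (Fintype.card F ^ (finrank F V - j) - Fintype.card F ^ j) := by
  induction n with
  | zero => simp [Nat.card_unique]
  | succ n ih =>
    have hfiber (s : B.IsotropicFrame n) :
        Nat.card ((B.orthogonal (span F (Set.range s.1)) : Set V) \ span F (Set.range s.1) : Set V)
          = Fintype.card F ^ (finrank F V - n) - Fintype.card F ^ n := by
      rw [Submodule.card_sdiff_of_le (span_le_orthogonal_span
          (by rintro _ ⟨i, rfl⟩ _ ⟨j, rfl⟩; exact s.2.2 i j)),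
        finrank_orthogonal hB', finrank_span_eq_card s.2.1, Fintype.card_fin]
    have := Fintype.ofFinite (B.IsotropicFrame n)
    rw [Nat.card_congr (isotropicFrameSuccEquiv hB n), Nat.card_sigma, Finset.sum_congr rfl
      fun s _ => hfiber s, Finset.sum_const, Finset.card_univ, ← Nat.card_eq_fintype_card, ih,
      smul_eq_mul, Finset.prod_range_succ]

theorem card_isLagrangian (hB : B.IsAlt) (hB' : B.Nondegenerate) {g : ℕ}
    (hV : finrank F V = 2 * g) :
    Nat.card {W // B.IsLagrangian W} =
      ∏ i ∈ Finset.range g, (Fintype.card F ^ (i + 1) + 1) := by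
  have := Fintype.ofFinite {W // B.IsLagrangian W}
  have hq : 1 < Fintype.card F := Fintype.one_lt_card
  have hframes := card_isotropicFrame hB hB' g
  rw [Nat.card_congr (isotropicFrameEquivSigma hV), Nat.card_sigma,
    Finset.sum_congr rfl fun L _ => Submodule.card_linearIndependent_span_eq L.1
      (by have := L.2.2; omega), Finset.sum_const, Finset.card_univ, ← Nat.card_eq_fintype_card,
    smul_eq_mul, hV] at hframes
  have hpos : 0 < ∏ j ∈ Finset.range g, (Fintype.card F ^ g - Fintype.card F ^ j) :=
    Finset.prod_pos fun j hj => Nat.sub_pos_of_lt (Nat.pow_lt_pow_right hq (Finset.mem_range.mp hj))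
  refine Nat.eq_of_mul_eq_mul_right hpos ?_
  rw [hframes, ← Finset.prod_range_reflect (fun i => Fintype.card F ^ (i + 1) + 1),
    ← Finset.prod_mul_distrib]
  refine Finset.prod_congr rfl fun j hj => ?_
  rw [show g - 1 - j + 1 = g - j by have := Finset.mem_range.mp hj; omega,
    ← Nat.pow_sub_pow_mul_pow_add_one (Finset.mem_range.mp hj).le, mul_comm]

theorem IsLagrangian.card_isCompl (hB : B.IsAlt) (hB' : B.Nondegenerate)
    (hP : B.IsLagrangian P) :
    Nat.card {Q // IsCompl P Q ∧ B.IsLagrangian Q} =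
      Fintype.card F ^ (finrank F P + 1).choose 2 := by
  obtain ⟨Q₀, hQ₀, h⟩ := hP.exists_isCompl hB hB'
  rw [← Nat.card_congr (isComplLagrangianEquiv hB hP hQ₀ h),
    Nat.card_congr (symmetricPairingEquiv hB.isRefl hB' hP hQ₀ h),
    card_isSymm (n := finrank F P) (by have := hP.2; have := hQ₀.2; omega)]

theorem card_transverse_lagrangian_pairs (hB : B.IsAlt) (hB' : B.Nondegenerate) {g : ℕ}
    (hV : finrank F V = 2 * g) :
    Nat.card {PQ : Submodule F V × Submodule F V //
        B.IsLagrangian PQ.1 ∧ B.IsLagrangian PQ.2 ∧ PQ.1 ⊓ PQ.2 = ⊥} =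
      Nat.card {W // B.IsLagrangian W} * Fintype.card F ^ (g + 1).choose 2 := by
  let e : {PQ : Submodule F V × Submodule F V //
        B.IsLagrangian PQ.1 ∧ B.IsLagrangian PQ.2 ∧ PQ.1 ⊓ PQ.2 = ⊥} ≃
      Σ P : {W // B.IsLagrangian W}, {Q // IsCompl P.1 Q ∧ B.IsLagrangian Q} :=
    { toFun x := ⟨⟨x.1.1, x.2.1⟩, x.1.2,
        (x.2.1.isCompl_iff_disjoint x.2.2.1).mpr (disjoint_iff.mpr x.2.2.2), x.2.2.1⟩
      invFun y := ⟨(y.1.1, y.2.1), y.1.2, y.2.2.2, y.2.2.1.inf_eq_bot⟩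
      left_inv _ := rfl
      right_inv _ := rfl }
  have := Fintype.ofFinite {W // B.IsLagrangian W}
  rw [Nat.card_congr e, Nat.card_sigma, Finset.sum_congr rfl fun P _ => P.2.card_isCompl hB hB',
    Finset.sum_congr rfl fun P _ => by rw [show finrank F P.1 = g by have := P.2.2; omega],
    Finset.sum_const, Finset.card_univ, ← Nat.card_eq_fintype_card, smul_eq_mul]

end FiniteField

end LinearMap.BilinForm

section StandardForm

variable (F : Type*) [Field F] (g : ℕ)

def stdBilinForm : LinearMap.BilinForm F ((Fin g ⊕ Fin g) → F) := by
  refine LinearMap.mk₂ F (stdForm F g) ?_ ?_ ?_ ?_ <;> intros <;>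
    simp only [stdForm, Pi.add_apply, Pi.smul_apply, smul_eq_mul, ← Finset.sum_add_distrib,
      Finset.mul_sum] <;>
    exact Finset.sum_congr rfl fun _ _ => by ring

theorem stdBilinForm_isAlt : (stdBilinForm F g).IsAlt :=
  fun x => (Finset.sum_eq_zero fun _ _ => by ring : stdForm F g x x = 0)

theorem stdBilinForm_nondegenerate : (stdBilinForm F g).Nondegenerate := by
  refine (LinearMap.IsRefl.nondegenerate_iff_separatingLeft
    (stdBilinForm_isAlt F g).isRefl).mpr fun x hx => funext fun i => ?_
  cases i with
  | inl i => simpa [stdBilinForm, stdForm, Pi.single_apply] using hx (Pi.single (Sum.inr i) 1)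
  | inr i => simpa [stdBilinForm, stdForm, Pi.single_apply] using hx (Pi.single (Sum.inl i) 1)

theorem finrank_sum_fin_fun : finrank F ((Fin g ⊕ Fin g) → F) = 2 * g := by
  rw [Module.finrank_fintype_fun_eq_card, Fintype.card_sum, Fintype.card_fin, two_mul]

theorem isLagrangian_iff_stdBilinForm (L : Submodule F ((Fin g ⊕ Fin g) → F)) :
    IsLagrangian F g L ↔ (stdBilinForm F g).IsLagrangian L := by
  rw [LinearMap.BilinForm.IsLagrangian, finrank_sum_fin_fun]
  exact ⟨fun ⟨h₁, h₂⟩ => ⟨fun y hy x hx => h₂ x hx y hy, by omega⟩,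
    fun ⟨h₁, h₂⟩ => ⟨by omega, fun x hx y hy => h₁ hy x hx⟩⟩

theorem ratio_transverse_lagrangian_pairs [Fintype F] :
    (Nat.card {P : Submodule F ((Fin g ⊕ Fin g) → F) × Submodule F ((Fin g ⊕ Fin g) → F) //
          IsLagrangian F g P.1 ∧ IsLagrangian F g P.2 ∧ P.1 ⊓ P.2 = ⊥} : ℝ) /
        (Nat.card {L : Submodule F ((Fin g ⊕ Fin g) → F) // IsLagrangian F g L} : ℝ) ^ 2 =
      ∏ i ∈ Finset.range g, (1 + (Fintype.card F : ℝ)⁻¹ ^ (i + 1))⁻¹ := by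
  simp only [isLagrangian_iff_stdBilinForm]
  rw [LinearMap.BilinForm.card_transverse_lagrangian_pairs (stdBilinForm_isAlt F g)
      (stdBilinForm_nondegenerate F g) (finrank_sum_fin_fun F g),
    LinearMap.BilinForm.card_isLagrangian (stdBilinForm_isAlt F g)
      (stdBilinForm_nondegenerate F g) (finrank_sum_fin_fun F g),
    Nat.choose_succ_two_eq_sum_range, ← Finset.prod_pow_eq_pow_sum]
  have hL : (∏ i ∈ Finset.range g, ((Fintype.card F : ℝ) ^ (i + 1) + 1)) ≠ 0 :=
    Finset.prod_ne_zero_iff.mpr fun _ _ => by positivity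
  push_cast
  rw [sq, mul_div_mul_left _ _ hL, ← Finset.prod_div_distrib]
  refine Finset.prod_congr rfl fun i _ => ?_
  rw [inv_pow]
  field_simp

end StandardForm

/-- As `g → ∞`, the probability that two independently uniformly chosen maximal isotropic
subspaces of a `2g`-dimensional symplectic `F_q`-vector space intersect trivially converges
to `∏_{i=1}^∞ (1+q^{−i})^{−1}`. -/
theorem stmt6 (F : Type*) [Field F] [Fintype F] :
    Tendsto (fun g : ℕ =>
      (Nat.card {P : Submodule F ((Fin g ⊕ Fin g) → F) × Submodule F ((Fin g ⊕ Fin g) → F) //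
          IsLagrangian F g P.1 ∧ IsLagrangian F g P.2 ∧ P.1 ⊓ P.2 = ⊥} : ℝ) /
        (Nat.card {L : Submodule F ((Fin g ⊕ Fin g) → F) // IsLagrangian F g L} : ℝ) ^ 2)
      atTop
      (nhds (∏' i : ℕ, (1 + (Fintype.card F : ℝ)⁻¹ ^ (i + 1))⁻¹)) := by
  have hq : (1 : ℝ) < Fintype.card F := by exact_mod_cast Fintype.one_lt_card
  have hsum : Summable fun i : ℕ => (Fintype.card F : ℝ)⁻¹ ^ (i + 1) :=
    (summable_nat_add_iff 1).mpr
      (summable_geometric_of_lt_one (by positivity) (inv_lt_one_of_one_lt₀ hq))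
  have hmul : Multipliable fun i : ℕ => (1 + (Fintype.card F : ℝ)⁻¹ ^ (i + 1))⁻¹ :=
    Real.multipliable_of_summable_log (fun _ => by positivity)
      (by simpa only [Real.log_inv] using (Real.summable_log_one_add_of_summable hsum).neg)
  exact hmul.hasProd.tendsto_prod_nat.congr fun g => (ratio_transverse_lagrangian_pairs F g).symm
end

section
/- The identity ∏_{i=1}^∞ (1+q^{−i})^{−1} = ∏_{j=1}^∞ (1−q^{1−2j}) holds for every real q > 1. -/
/-!
With `x = q⁻¹`, write `L = ∏ (1 - xⁿ)`. Splitting `L` into odd and even exponents and using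
`1 - x²ⁿ = (1 + xⁿ)(1 - xⁿ)` gives `L = ∏ (1 - x²ʲ⁻¹) · ∏ (1 + xⁿ) · L`. Since `|x| < 1`, all
three products converge and `L ≠ 0`, so `∏ (1 + xⁿ) · ∏ (1 - x²ʲ⁻¹) = 1`.
-/

section EulerOddParts

variable {𝕜 : Type*} [NormedField 𝕜] {x : 𝕜}

lemma summable_norm_pow_comp (hx : ‖x‖ < 1) {e : ℕ → ℕ} (he : Function.Injective e) :
    Summable fun n ↦ ‖x ^ e n‖ := by
  simp_rw [norm_pow]
  exact (summable_geometric_of_lt_one (norm_nonneg x) hx).comp_injective he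

variable [CompleteSpace 𝕜]

lemma multipliable_one_add_pow_comp (hx : ‖x‖ < 1) {e : ℕ → ℕ} (he : Function.Injective e) :
    Multipliable fun n ↦ 1 + x ^ e n :=
  multipliable_one_add_of_summable (summable_norm_pow_comp hx he)

lemma multipliable_one_sub_pow_comp (hx : ‖x‖ < 1) {e : ℕ → ℕ} (he : Function.Injective e) :
    Multipliable fun n ↦ 1 - x ^ e n := by
  simpa only [sub_eq_add_neg] using multipliable_one_add_of_summable (f := fun n ↦ -x ^ e n)
    (by simpa only [norm_neg] using summable_norm_pow_comp hx he)

lemma tprod_one_sub_pow_succ_ne_zero (hx : ‖x‖ < 1) : ∏' n : ℕ, (1 - x ^ (n + 1)) ≠ 0 := by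
  simp_rw [sub_eq_add_neg]
  refine tprod_one_add_ne_zero_of_summable (fun n ↦ ?_) ?_
  · rw [← sub_eq_add_neg, sub_ne_zero]
    refine fun h ↦ (pow_lt_one₀ (norm_nonneg x) hx n.succ_ne_zero).ne ?_
    rw [← norm_pow, ← h, norm_one]
  · simpa only [norm_neg] using summable_norm_pow_comp hx (add_left_injective 1)

theorem tprod_one_add_pow_mul_tprod_one_sub_odd_pow (hx : ‖x‖ < 1) :
    (∏' n : ℕ, (1 + x ^ (n + 1))) * ∏' n : ℕ, (1 - x ^ (2 * n + 1)) = 1 := by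
  have hinj_succ : Function.Injective fun n : ℕ ↦ n + 1 := add_left_injective 1
  have hinj_odd : Function.Injective fun n : ℕ ↦ 2 * n + 1 := fun a b h ↦ by simpa using h
  have hinj_even : Function.Injective fun n : ℕ ↦ 2 * n + 1 + 1 := fun a b h ↦ by simpa using h
  set L := ∏' n : ℕ, (1 - x ^ (n + 1))
  have hsplit : L = (∏' n : ℕ, (1 - x ^ (2 * n + 1))) * ∏' n : ℕ, (1 - x ^ (2 * n + 1 + 1)) :=
    (tprod_even_mul_odd (f := fun k ↦ 1 - x ^ (k + 1))
      (multipliable_one_sub_pow_comp hx hinj_odd) (multipliable_one_sub_pow_comp hx hinj_even)).symm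
  have hfactor : ∏' n : ℕ, (1 - x ^ (2 * n + 1 + 1)) = (∏' n : ℕ, (1 + x ^ (n + 1))) * L := by
    rw [← (multipliable_one_add_pow_comp hx hinj_succ).tprod_mul
      (multipliable_one_sub_pow_comp hx hinj_succ)]
    exact tprod_congr fun n ↦ by ring
  apply mul_right_cancel₀ (tprod_one_sub_pow_succ_ne_zero hx)
  calc _ = (∏' n : ℕ, (1 - x ^ (2 * n + 1))) * ((∏' n : ℕ, (1 + x ^ (n + 1))) * L) := by ring
    _ = 1 * L := by rw [← hfactor, ← hsplit, one_mul]

end EulerOddParts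

/-- Euler's identity `∏_{i=1}^∞ (1+q^{−i})^{−1} = ∏_{j=1}^∞ (1−q^{1−2j})` for real `q > 1`
(the common value is the Malle–Garton constant). -/
theorem stmt7 (q : ℝ) (hq : 1 < q) :
    (∏' i : ℕ, (1 + q⁻¹ ^ (i + 1))⁻¹) = ∏' j : ℕ, (1 - q⁻¹ ^ (2 * (j + 1) - 1)) := by
  have hx : ‖q⁻¹‖ < 1 := by
    rw [norm_inv, Real.norm_of_nonneg (by linarith)]
    exact inv_lt_one_of_one_lt₀ hq
  have heuler := tprod_one_add_pow_mul_tprod_one_sub_odd_pow hx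
  rw [(multipliable_one_add_pow_comp hx (add_left_injective 1)).tprod_inv₀
    (left_ne_zero_of_mul_eq_one heuler), inv_eq_of_mul_eq_one_right heuler]
  exact tprod_congr fun j ↦ by rw [show 2 * (j + 1) - 1 = 2 * j + 1 by omega]
end

section
/- As g → ∞ with r fixed, the proportion of g×g matrices over F_q having rank g−r converges to q^{−r²} · ∏_{i=r+1}^∞ (1−q^{−i}) · ∏_{i=1}^r (1−q^{−i})^{−1}. -/
/-!
A `g × g` matrix of rank `k` is its column space, a `k`-dimensional subspace `S` of `F^g`,
together with a surjection `F^g → S ≅ F^k`; a `g × k` matrix of rank `k` is the same subspace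
together with a surjection `F^k → F^k`. Since transposition identifies `g × k` and `k × g`
matrices of rank `k`, this gives `#{g × g, rank k} · #{k × k, rank k} = #{k × g, rank k}²`,
and full-rank counts are the products `∏_{i<k} (q^n - q^i)`. With `k = g - r` and `x = q⁻¹`
the proportion becomes `x^(r²) · (x^(r+1); x)_k · (x^(k+1); x)_r / (x; x)_r`, whose three
factors tend to `∏_{i>r} (1 - x^i)`, `1` and `∏_{i≤r} (1 - x^i)`.
-/

open Matrix Filter Topology Module

section Counting

variable {F : Type*} [Field F]

def LinearMap.rangeEqEquivSurjective {V W U : Type*} [AddCommGroup V] [Module F V]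
    [AddCommGroup W] [Module F W] [AddCommGroup U] [Module F U]
    (S : Submodule F W) (e : S ≃ₗ[F] U) :
    {f : V →ₗ[F] W // LinearMap.range f = S} ≃
      {f : V →ₗ[F] U // Function.Surjective f} where
  toFun f := ⟨e.toLinearMap ∘ₗ f.1.codRestrict S fun v => f.2.le (f.1.mem_range_self v), by
    refine e.surjective.comp ?_
    rintro ⟨w, hw⟩
    rw [← f.2] at hw
    obtain ⟨v, rfl⟩ := hw
    exact ⟨v, rfl⟩⟩
  invFun f := ⟨S.subtype ∘ₗ e.symm.toLinearMap ∘ₗ f.1, by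
    rw [LinearMap.range_comp, LinearMap.range_comp, LinearMap.range_eq_top.2 f.2,
      Submodule.map_top, LinearEquiv.range, Submodule.map_top, Submodule.range_subtype]⟩
  left_inv f := by ext; simp
  right_inv f := by ext v; exact (congrArg e (Subtype.ext rfl)).trans (e.apply_symm_apply _)

theorem LinearMap.card_finrank_range_eq_mul {V W : Type*} [AddCommGroup V] [Module F V]
    [AddCommGroup W] [Module F W] [FiniteDimensional F W] (k : ℕ) :
    Nat.card {f : V →ₗ[F] W // finrank F (LinearMap.range f) = k} =
      Nat.card {S : Submodule F W // finrank F S = k} *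
        Nat.card {f : V →ₗ[F] (Fin k → F) // Function.Surjective f} := by
  let range : {f : V →ₗ[F] W // finrank F (LinearMap.range f) = k} →
      {S : Submodule F W // finrank F S = k} := fun f => ⟨LinearMap.range f.1, f.2⟩
  have fiber (S : {S : Submodule F W // finrank F S = k}) :
      {f // range f = S} ≃ {f : V →ₗ[F] (Fin k → F) // Function.Surjective f} :=
    let e : S.1 ≃ₗ[F] (Fin k → F) := LinearEquiv.ofFinrankEq _ _ (by simp [S.2])
    ((Equiv.subtypeEquivRight fun f => Subtype.ext_iff).trans
      (Equiv.subtypeSubtypeEquivSubtype (q := fun f => LinearMap.range f = S.1)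
        fun h => by rw [h]; exact S.2)).trans
      (LinearMap.rangeEqEquivSurjective S.1 e)
  rw [Nat.card_congr ((Equiv.sigmaFiberEquiv range).symm.trans
    (Equiv.sigmaEquivProdOfEquiv fiber)), Nat.card_prod]

theorem Matrix.rank_eq_card_iff_surjective {m n : Type*} [Fintype m] [Fintype n]
    (M : Matrix m n F) : M.rank = Fintype.card m ↔ Function.Surjective M.mulVecLin := by
  rw [← LinearMap.range_eq_top, Submodule.eq_top_iff_finrank_eq, finrank_fintype_fun_eq_card]
  rfl

theorem Matrix.rank_eq_card_iff_linearIndependent_row {m n : Type*} [Fintype m] [Fintype n]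
    (M : Matrix m n F) : M.rank = Fintype.card m ↔ LinearIndependent F M.row := by
  rw [linearIndependent_iff_card_eq_finrank_span, rank_eq_finrank_span_row, eq_comm]
  rfl

theorem Matrix.card_rank_eq_mul {m n : Type*} [Fintype m] [Fintype n] [DecidableEq n] (k : ℕ) :
    Nat.card {M : Matrix m n F // M.rank = k} =
      Nat.card {S : Submodule F (m → F) // finrank F S = k} *
        Nat.card {M : Matrix (Fin k) n F // M.rank = k} := by
  rw [Nat.card_congr (Equiv.subtypeEquiv (p := fun M : Matrix m n F => M.rank = k)
      (q := fun f => finrank F (LinearMap.range f) = k) toLin'.toEquiv fun M => Iff.rfl),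
    LinearMap.card_finrank_range_eq_mul,
    Nat.card_congr (Equiv.subtypeEquiv (p := fun M : Matrix (Fin k) n F => M.rank = k)
      (q := fun f : (n → F) →ₗ[F] (Fin k → F) => Function.Surjective f) toLin'.toEquiv
      fun M => ?_)]
  have h := rank_eq_card_iff_surjective M
  rw [Fintype.card_fin] at h
  exact h

theorem Matrix.card_rank_transpose {m n : Type*} [Fintype m] [Fintype n] (k : ℕ) :
    Nat.card {M : Matrix m n F // M.rank = k} = Nat.card {M : Matrix n m F // M.rank = k} :=
  Nat.card_congr <| Equiv.subtypeEquiv (transposeAddEquiv m n F).toEquiv fun M => by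
    simp [rank_transpose]

theorem Matrix.card_rank_mul_card_rank_self (g k : ℕ) :
    Nat.card {M : Matrix (Fin g) (Fin g) F // M.rank = k} *
        Nat.card {M : Matrix (Fin k) (Fin k) F // M.rank = k} =
      Nat.card {M : Matrix (Fin k) (Fin g) F // M.rank = k} ^ 2 := by
  rw [card_rank_eq_mul, sq, mul_right_comm, ← card_rank_eq_mul, card_rank_transpose]

theorem Matrix.card_rank_eq_prod_of_le [Fintype F] {n : Type*} [Fintype n] {k : ℕ}
    (hk : k ≤ Fintype.card n) :
    Nat.card {M : Matrix (Fin k) n F // M.rank = k} =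
      ∏ i : Fin k, (Fintype.card F ^ Fintype.card n - Fintype.card F ^ (i : ℕ)) := by
  have := card_linearIndependent (K := F) (V := n → F) (k := k) (by simpa using hk)
  rw [finrank_fintype_fun_eq_card] at this
  rw [← this]
  exact Nat.card_congr <| Equiv.subtypeEquivRight fun M => by
    have h := rank_eq_card_iff_linearIndependent_row M
    rw [Fintype.card_fin] at h
    exact h

end Counting

/-- The `q`-Pochhammer symbol `(x^(s+1); x)_k`. -/
def qPochhammer {R : Type*} [CommRing R] (x : R) (s k : ℕ) : R :=
  ∏ j ∈ Finset.range k, (1 - x ^ (s + 1 + j))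

section qPochhammer

theorem qPochhammer_add {R : Type*} [CommRing R] (x : R) (s m n : ℕ) :
    qPochhammer x s (m + n) = qPochhammer x s m * qPochhammer x (s + m) n := by
  simp only [qPochhammer, Finset.prod_range_add]
  congr 1
  exact Finset.prod_congr rfl fun j _ => by ring_nf

variable {x : ℝ}

theorem qPochhammer_ne_zero (hx : |x| < 1) (s k : ℕ) : qPochhammer x s k ≠ 0 :=
  Finset.prod_ne_zero_iff.2 fun j _ => sub_ne_zero.2 fun h => by
    have := pow_lt_one₀ (abs_nonneg x) hx (n := s + 1 + j) (by omega)
    rw [← abs_pow, ← h, abs_one] at this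
    exact lt_irrefl 1 this

theorem tendsto_qPochhammer_length (hx : |x| < 1) (s : ℕ) :
    Tendsto (qPochhammer x s) atTop (𝓝 (∏' j, (1 - x ^ (s + 1 + j)))) := by
  have summable : Summable fun j => -x ^ (s + 1 + j) := by
    simpa only [pow_add, neg_mul] using ((summable_geometric_of_abs_lt_one hx).mul_left
      (x ^ (s + 1))).neg
  unfold qPochhammer
  simpa only [sub_eq_add_neg] using
    (Real.multipliable_one_add_of_summable summable).hasProd.tendsto_prod_nat

theorem tendsto_qPochhammer_shift (hx : |x| < 1) (r : ℕ) :
    Tendsto (fun k => qPochhammer x k r) atTop (𝓝 1) := by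
  have factor (j : ℕ) : Tendsto (fun k => 1 - x ^ (k + 1 + j)) atTop (𝓝 1) := by
    simpa [Function.comp_def, add_assoc] using
      ((tendsto_pow_atTop_nhds_zero_of_abs_lt_one hx).comp
        (tendsto_add_atTop_nat (1 + j))).const_sub 1
  simpa [qPochhammer] using tendsto_finsetProd (Finset.range r) fun j _ => factor j

end qPochhammer

theorem Fintype.abs_inv_card_lt_one (α : Type*) [Fintype α] [Nontrivial α] :
    |(Fintype.card α : ℝ)⁻¹| < 1 := by
  rw [abs_inv, Nat.abs_cast, inv_lt_one₀ (by positivity)]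
  exact_mod_cast Fintype.one_lt_card

theorem Nat.cast_prod_pow_sub_pow {q : ℕ} (hq : q ≠ 0) {k n : ℕ} (hkn : k ≤ n) :
    ((∏ i : Fin k, (q ^ n - q ^ (i : ℕ)) : ℕ) : ℝ) =
      (q : ℝ) ^ (n * k) * qPochhammer (q : ℝ)⁻¹ (n - k) k := by
  rw [Fin.prod_univ_eq_prod_range (fun i => q ^ n - q ^ i), Nat.cast_prod, qPochhammer,
    ← Finset.prod_range_reflect, pow_mul, ← Finset.card_range k, ← Finset.prod_const,
    Finset.card_range, ← Finset.prod_mul_distrib]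
  refine Finset.prod_congr rfl fun j hj => ?_
  have hjk := Finset.mem_range.1 hj
  have hsplit : n = (k - 1 - j) + (n - k + 1 + j) := by omega
  rw [Nat.cast_sub (Nat.pow_le_pow_right (Nat.pos_of_ne_zero hq) (by omega)), mul_sub, mul_one]
  push_cast
  nth_rewrite 3 [hsplit]
  rw [pow_add, inv_pow, mul_assoc, mul_inv_cancel₀ (by positivity), mul_one]

theorem Matrix.card_rank_div_card_eq (F : Type*) [Field F] [Fintype F] (k r : ℕ) :
    (Nat.card {M : Matrix (Fin (k + r)) (Fin (k + r)) F // M.rank = k} : ℝ) /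
        (Fintype.card F : ℝ) ^ ((k + r) * (k + r)) =
      (Fintype.card F : ℝ)⁻¹ ^ (r ^ 2) * qPochhammer (Fintype.card F : ℝ)⁻¹ r k *
        qPochhammer (Fintype.card F : ℝ)⁻¹ k r /
          qPochhammer (Fintype.card F : ℝ)⁻¹ 0 r := by
  set q := Fintype.card F
  have hq : q ≠ 0 := Fintype.card_ne_zero
  have hx := Fintype.abs_inv_card_lt_one F
  have count := congrArg (Nat.cast : ℕ → ℝ) (card_rank_mul_card_rank_self (F := F) (k + r) k)
  rw [Nat.cast_mul, Nat.cast_pow, card_rank_eq_prod_of_le (by simp),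
    card_rank_eq_prod_of_le (by simp)] at count
  simp only [Fintype.card_fin] at count
  rw [Nat.cast_prod_pow_sub_pow hq le_rfl, Nat.cast_prod_pow_sub_pow hq (by omega)] at count
  simp only [Nat.sub_self, Nat.add_sub_cancel_left] at count
  set x : ℝ := (q : ℝ)⁻¹
  have hQ : (q : ℝ) ≠ 0 := Nat.cast_ne_zero.2 hq
  have hxQ : x ^ (r ^ 2) * (q : ℝ) ^ (r ^ 2) = 1 := by
    rw [← mul_pow, inv_mul_cancel₀ hQ, one_pow]
  -- both sides are `(x; x)_(k+r)`
  have swap : qPochhammer x 0 k * qPochhammer x k r = qPochhammer x 0 r * qPochhammer x r k := by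
    have := qPochhammer_add x 0 k r
    rw [add_comm k r, qPochhammer_add] at this
    simpa only [zero_add] using this.symm
  have h0k := qPochhammer_ne_zero hx 0 k
  have h0r := qPochhammer_ne_zero hx 0 r
  rw [div_eq_div_iff (pow_ne_zero _ hQ) h0r]
  -- clear the factor `q^(k*k) * (x; x)_k = #{k × k, rank k}` of `count`
  apply mul_right_cancel₀ (mul_ne_zero (pow_ne_zero (k * k) hQ) h0k)
  linear_combination qPochhammer x 0 r * count -
    x ^ (r ^ 2) * qPochhammer x r k * (q : ℝ) ^ ((k + r) * (k + r)) * (q : ℝ) ^ (k * k) * swap -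
    qPochhammer x 0 r * qPochhammer x r k ^ 2 * (q : ℝ) ^ (2 * (k + r) * k) * hxQ

/-- As `g → ∞` with `r` fixed, the proportion of `g×g` matrices over `F_q` of rank `g−r`
converges to `q^{−r²} · ∏_{i=r+1}^∞ (1−q^{−i}) · ∏_{i=1}^r (1−q^{−i})^{−1}`. -/
theorem stmt12 (F : Type*) [Field F] [Fintype F] (r : ℕ) :
    Tendsto (fun g : ℕ =>
      (Nat.card {M : Matrix (Fin g) (Fin g) F // M.rank = g - r} : ℝ) /
        (Fintype.card F : ℝ) ^ (g * g))
      atTop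
      (nhds (((Fintype.card F : ℝ)⁻¹) ^ (r ^ 2) *
        (∏' i : ℕ, (1 - (Fintype.card F : ℝ)⁻¹ ^ (r + 1 + i))) *
        ∏ i ∈ Finset.range r, (1 - (Fintype.card F : ℝ)⁻¹ ^ (i + 1))⁻¹)) := by
  have hx := Fintype.abs_inv_card_lt_one F
  set x : ℝ := (Fintype.card F : ℝ)⁻¹
  rw [← tendsto_add_atTop_iff_nat r]
  simp only [Nat.add_sub_cancel, Matrix.card_rank_div_card_eq]
  convert (((tendsto_qPochhammer_length hx r).const_mul (x ^ (r ^ 2))).mul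
    (tendsto_qPochhammer_shift hx r)).div_const (qPochhammer x 0 r) using 2
  simp only [mul_one, div_eq_mul_inv, qPochhammer, zero_add, Finset.prod_inv_distrib, add_comm 1]
end
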